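/- Let K be an algebraically closed field of characteristic zero, and V, W finite-dimensional K[x,y]-modules that are NOT weakly isomorphic, with associated Lie algebras L_V = K⟨P,Q⟩ ⋉ V and L_W = K⟨S,T⟩ ⋉ W. Suppose there is a Lie algebra isomorphism φ: L_V → L_W with φ(K⟨P,Q⟩) ⊆ W. Then there are direct sum decompositions of K[x,y]-modules V = V₀ ⊕ V₂ and W = W₀ ⊕ W₂ such that: K[x,y] acts trivially (i.e. P, Q, S, T act as zero) on V₂ and W₂; V₂ and W₂ are isomorphic K[x,y]-modules; dim V₀ = dim W₀ ≤ 6; and V₀, W₀ are not weakly isomorphic. -/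

import Mathlib

/-!
Write `N = ker P ∩ ker Q` and `U = im P + im Q`. Because `φ(K⟨P,Q⟩)` lies in the abelian ideal
`W`, the bracket `φ[P, v] = [φ P, φ v]` only sees the `K²`-component of `φ v`; hence `P` and `Q`
factor through a map `V → K²`, so `dim V/N ≤ 2` and `dim U ≤ 4`. The isomorphism `φ` matches the
centres `ker(c ↦ c₁P + c₂Q) × N` of `L_V` and `L_W` and maps the derived algebra `{0} × U_V` onto
`{0} × U_W`; this gives `dim W/N_W + dim U_W ≤ 6` too (when `S, T` are proportional,
`dim W/N_W = dim U_W ≤ 3`). A complement of `N ∩ U` in `N` is a trivial direct summand, so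
splitting off trivial summands of a common dimension leaves `V₀, W₀` of dimension `≤ 6`, and a
weak isomorphism `V₀ ≅ W₀` would extend to `V ≅ W` through any isomorphism of the trivial parts.
-/

/-- The bracket of the semidirect product `L_V = K⟨P,Q⟩ ⋉ V` on `(K × K) × V`. -/
def lieBk {K V : Type*} [Field K] [AddCommGroup V] [Module K V]
    (P Q : V →ₗ[K] V) (a b : (K × K) × V) : (K × K) × V :=
  (0, (a.1.1 • P + a.1.2 • Q) b.2 - (b.1.1 • P + b.1.2 • Q) a.2)

/-- The abelian ideal `{0} ⊕ V` of `L_V`. -/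
def vEmb (K V : Type*) [Field K] [AddCommGroup V] [Module K V] :
    Submodule K ((K × K) × V) :=
  (⊥ : Submodule K (K × K)).prod (⊤ : Submodule K V)

/-- The subalgebra `K⟨P,Q⟩ = K² ⊕ {0}` of `L_V`. -/
def pqEmb (K V : Type*) [Field K] [AddCommGroup V] [Module K V] :
    Submodule K ((K × K) × V) :=
  (⊤ : Submodule K (K × K)).prod (⊥ : Submodule K V)

/-- Weak isomorphism of the `K[x,y]`-modules given by operator pairs `(P,Q)` and
`(S,T)`: some twist of `(S,T)` by an invertible 2×2 matrix is isomorphic to `(P,Q)`. -/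
def WeakIso {K V W : Type*} [Field K] [AddCommGroup V] [Module K V]
    [AddCommGroup W] [Module K W] (P Q : V →ₗ[K] V) (S T : W →ₗ[K] W) : Prop :=
  ∃ M : Matrix (Fin 2) (Fin 2) K, IsUnit M ∧ ∃ e : V ≃ₗ[K] W,
    ∀ v, e (P v) = (M 0 0 • S + M 0 1 • T) (e v) ∧
         e (Q v) = (M 1 0 • S + M 1 1 • T) (e v)

section

open Module Submodule

variable {K V W : Type*} [Field K] [AddCommGroup V] [Module K V] [AddCommGroup W] [Module K W]

def pencil (P Q : V →ₗ[K] V) : K × K →ₗ[K] Module.End K V :=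
  (LinearMap.toSpanSingleton K _ P).coprod (LinearMap.toSpanSingleton K _ Q)

lemma pencil_apply (P Q : V →ₗ[K] V) (c : K × K) : pencil P Q c = c.1 • P + c.2 • Q := rfl

@[simp]
lemma pencil_one_zero (P Q : V →ₗ[K] V) : pencil P Q (1, 0) = P := by simp [pencil_apply]

@[simp]
lemma pencil_zero_one (P Q : V →ₗ[K] V) : pencil P Q (0, 1) = Q := by simp [pencil_apply]

lemma lieBk_eq_pencil (P Q : V →ₗ[K] V) (a b : (K × K) × V) :
    lieBk P Q a b = (0, pencil P Q a.1 b.2 - pencil P Q b.1 a.2) := rfl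

def jointKer (P Q : V →ₗ[K] V) : Submodule K V := LinearMap.ker P ⊓ LinearMap.ker Q

def jointRange (P Q : V →ₗ[K] V) : Submodule K V := LinearMap.range P ⊔ LinearMap.range Q

lemma pencil_apply_mem_jointRange (P Q : V →ₗ[K] V) (c : K × K) (v : V) :
    pencil P Q c v ∈ jointRange P Q :=
  add_mem (mem_sup_left (smul_mem _ _ (LinearMap.mem_range_self P v)))
    (mem_sup_right (smul_mem _ _ (LinearMap.mem_range_self Q v)))

lemma lieBk_snd_mem_jointRange (P Q : V →ₗ[K] V) (a b : (K × K) × V) :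
    (lieBk P Q a b).2 ∈ jointRange P Q :=
  sub_mem (pencil_apply_mem_jointRange P Q _ _) (pencil_apply_mem_jointRange P Q _ _)

def lieCenter (P Q : V →ₗ[K] V) : Submodule K ((K × K) × V) :=
  (LinearMap.ker (pencil P Q)).prod (jointKer P Q)

lemma mem_lieCenter_iff {P Q : V →ₗ[K] V} {x : (K × K) × V} :
    x ∈ lieCenter P Q ↔ ∀ y, lieBk P Q x y = 0 := by
  refine ⟨fun ⟨hx, hP, hQ⟩ y => ?_, fun h => ⟨?_, ?_, ?_⟩⟩
  · simp_all [lieBk_eq_pencil, pencil_apply]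
  · ext v
    simpa [lieBk_eq_pencil] using h (0, v)
  · simpa [lieBk_eq_pencil, pencil_apply] using h ((1, 0), 0)
  · simpa [lieBk_eq_pencil, pencil_apply] using h ((0, 1), 0)

lemma finrank_submodule_prod {M N : Type*} [AddCommGroup M] [Module K M] [AddCommGroup N]
    [Module K N] (p : Submodule K M) (q : Submodule K N) [FiniteDimensional K p]
    [FiniteDimensional K q] : finrank K (p.prod q) = finrank K p + finrank K q := by
  rw [← p.range_subtype, ← q.range_subtype, ← LinearMap.range_prodMap,
    LinearMap.finrank_range_of_inj (p.injective_subtype.prodMap q.injective_subtype),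
    finrank_prod, p.range_subtype, q.range_subtype]

lemma finrank_lieCenter [FiniteDimensional K V] (P Q : V →ₗ[K] V) :
    finrank K (lieCenter P Q) =
      finrank K (LinearMap.ker (pencil P Q)) + finrank K (jointKer P Q) :=
  finrank_submodule_prod _ _

section LieEquiv

variable {P Q : V →ₗ[K] V} {S T : W →ₗ[K] W} (φ : ((K × K) × V) ≃ₗ[K] ((K × K) × W))
  (hφ : ∀ a b, φ (lieBk P Q a b) = lieBk S T (φ a) (φ b))
include hφ

lemma map_lieCenter : (lieCenter P Q).map (φ : ((K × K) × V) →ₗ[K] (K × K) × W) =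
    lieCenter S T := by
  ext y
  rw [mem_map_equiv, mem_lieCenter_iff, mem_lieCenter_iff]
  refine ⟨fun h y' => ?_, fun h y' => ?_⟩
  · simpa [hφ] using congrArg φ (h (φ.symm y'))
  · rw [← φ.map_eq_zero_iff, hφ, φ.apply_symm_apply]
    exact h (φ y')

lemma finrank_ker_pencil_add_finrank_jointKer_eq [FiniteDimensional K V] [FiniteDimensional K W] :
    finrank K (LinearMap.ker (pencil P Q)) + finrank K (jointKer P Q) =
      finrank K (LinearMap.ker (pencil S T)) + finrank K (jointKer S T) := by
  rw [← finrank_lieCenter, ← finrank_lieCenter, ← map_lieCenter φ hφ, LinearEquiv.finrank_map_eq]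

lemma finrank_jointRange_le [FiniteDimensional K V] :
    finrank K (jointRange S T) ≤ finrank K (jointRange P Q) := by
  set F := LinearMap.snd K (K × K) W ∘ₗ (φ : ((K × K) × V) →ₗ[K] (K × K) × W) ∘ₗ
    LinearMap.inr K (K × K) V
  have hpencil : ∀ c w, pencil S T c w ∈ (jointRange P Q).map F := by
    intro c w
    have h := hφ (φ.symm (c, 0)) (φ.symm (0, w))
    simp only [LinearEquiv.apply_symm_apply] at h
    refine ⟨_, lieBk_snd_mem_jointRange P Q (φ.symm (c, 0)) (φ.symm (0, w)), ?_⟩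
    simpa [F, lieBk_eq_pencil] using congrArg Prod.snd h
  have hle : jointRange S T ≤ (jointRange P Q).map F := by
    refine sup_le ?_ ?_ <;> rintro _ ⟨w, rfl⟩
    · simpa using hpencil (1, 0) w
    · simpa using hpencil (0, 1) w
  exact (finrank_mono hle).trans (finrank_map_le F _)

end LieEquiv

section Factorization

variable {P Q : V →ₗ[K] V} {S T : W →ₗ[K] W} (φ : ((K × K) × V) ≃ₗ[K] ((K × K) × W))
  (hφ : ∀ a b, φ (lieBk P Q a b) = lieBk S T (φ a) (φ b))
  (hPQW : (pqEmb K V).map (φ : ((K × K) × V) →ₗ[K] (K × K) × W) ≤ vEmb K W)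
include hφ hPQW

omit hφ in
lemma fst_apply_inl_eq_zero (c : K × K) : (φ (c, 0)).1 = 0 :=
  (hPQW (mem_map_of_mem (p := pqEmb K V) ⟨mem_top, (mem_bot K).2 rfl⟩)).1

lemma pencil_apply_eq (c : K × K) (v : V) :
    pencil P Q c v = (φ.symm (0, -pencil S T (φ (0, v)).1 (φ (c, 0)).2)).2 := by
  have h := hφ (c, 0) (0, v)
  rw [lieBk_eq_pencil, lieBk_eq_pencil, fst_apply_inl_eq_zero φ hPQW] at h
  simpa using (congrArg Prod.snd (φ.symm_apply_eq.2 h.symm)).symm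

lemma exists_pencil_eq_comp :
    ∃ A : V →ₗ[K] K × K, ∀ c, ∃ g : K × K →ₗ[K] V, pencil P Q c = g ∘ₗ A :=
  ⟨LinearMap.fst K (K × K) W ∘ₗ (φ : ((K × K) × V) →ₗ[K] (K × K) × W) ∘ₗ
      LinearMap.inr K (K × K) V,
    fun c => ⟨LinearMap.snd K (K × K) V ∘ₗ (φ.symm : ((K × K) × W) →ₗ[K] (K × K) × V) ∘ₗ
      LinearMap.inr K (K × K) W ∘ₗ (-(pencil S T).flip (φ (c, 0)).2), by
        ext v
        exact pencil_apply_eq φ hφ hPQW c v⟩⟩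

end Factorization

section PencilFactorization

variable [FiniteDimensional K V] {P Q : V →ₗ[K] V} {A : V →ₗ[K] K × K}
  (hA : ∀ c, ∃ g : K × K →ₗ[K] V, pencil P Q c = g ∘ₗ A)
include hA

lemma finrank_le_finrank_jointKer_add_two : finrank K V ≤ finrank K (jointKer P Q) + 2 := by
  have hker : LinearMap.ker A ≤ jointKer P Q := by
    intro v hv
    obtain ⟨g₁, hg₁⟩ := hA (1, 0)
    obtain ⟨g₂, hg₂⟩ := hA (0, 1)
    have h₁ := LinearMap.congr_fun hg₁ v
    have h₂ := LinearMap.congr_fun hg₂ v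
    simp_all [pencil_apply, jointKer]
  have hrange := (LinearMap.range A).finrank_le
  rw [finrank_prod, finrank_self] at hrange
  have := (LinearMap.finrank_range_add_finrank_ker A).symm
  have := finrank_mono hker
  omega

lemma finrank_jointRange_le_four : finrank K (jointRange P Q) ≤ 4 := by
  have hrange : ∀ c, finrank K (LinearMap.range (pencil P Q c)) ≤ 2 := by
    intro c
    obtain ⟨g, hg⟩ := hA c
    calc finrank K (LinearMap.range (pencil P Q c))
        ≤ finrank K (LinearMap.range g) := by
          rw [hg]
          exact finrank_mono (LinearMap.range_comp_le_range A g)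
      _ ≤ 2 := by simpa using LinearMap.finrank_range_le g
  have hP := hrange (1, 0)
  have hQ := hrange (0, 1)
  rw [pencil_one_zero] at hP
  rw [pencil_zero_one] at hQ
  have := finrank_add_le_finrank_add_finrank (LinearMap.range P) (LinearMap.range Q)
  unfold jointRange
  omega

end PencilFactorization

section Pairs

variable {S T : W →ₗ[K] W}

lemma jointKer_eq_and_jointRange_eq_of_eq_smul {d : K} (h : S = d • T) :
    jointKer S T = LinearMap.ker T ∧ jointRange S T = LinearMap.range T := by
  subst h
  refine ⟨inf_eq_right.2 fun w hw => ?_, sup_eq_right.2 ?_⟩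
  · simp_all
  · rintro _ ⟨w, rfl⟩
    exact ⟨d • w, by simp⟩

lemma jointRange_eq_bot_of_two_le_finrank_ker_pencil
    (h : 2 ≤ finrank K (LinearMap.ker (pencil S T))) : jointRange S T = ⊥ := by
  have htop : LinearMap.ker (pencil S T) = ⊤ :=
    eq_top_of_finrank_eq (le_antisymm (finrank_le _) (by simpa using h))
  have hpencil : pencil S T = 0 := LinearMap.ker_eq_top.1 htop
  have hS : S = 0 := by rw [← pencil_one_zero S T, hpencil, LinearMap.zero_apply]
  have hT : T = 0 := by rw [← pencil_zero_one S T, hpencil, LinearMap.zero_apply]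
  simp [jointRange, hS, hT]

variable [FiniteDimensional K W]

lemma finrank_jointKer_add_finrank_jointRange {c : K × K} (hc : c ≠ 0)
    (hpc : pencil S T c = 0) :
    finrank K (jointKer S T) + finrank K (jointRange S T) = finrank K W := by
  obtain ⟨R, hN, hU⟩ : ∃ R : W →ₗ[K] W,
      jointKer S T = LinearMap.ker R ∧ jointRange S T = LinearMap.range R := by
    rw [pencil_apply] at hpc
    by_cases hc₁ : c.1 = 0
    · have hT : T = (0 : K) • S := by
        have hc₂ : c.2 ≠ 0 := fun h => hc (Prod.ext hc₁ h)
        simpa [hc₁, hc₂] using hpc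
      obtain ⟨hN, hU⟩ := jointKer_eq_and_jointRange_eq_of_eq_smul hT
      rw [jointKer, inf_comm] at hN
      rw [jointRange, sup_comm] at hU
      exact ⟨S, hN, hU⟩
    · refine ⟨T, jointKer_eq_and_jointRange_eq_of_eq_smul (d := -(c.1⁻¹ * c.2)) ?_⟩
      rw [neg_smul, eq_neg_iff_add_eq_zero, ← smul_smul, ← inv_smul_smul₀ hc₁ S, ← smul_add, hpc,
        smul_zero]
  rw [hN, hU, add_comm, LinearMap.finrank_range_add_finrank_ker]

lemma finrank_add_finrank_jointRange_le
    (hN : finrank K W ≤ finrank K (jointKer S T) + finrank K (LinearMap.ker (pencil S T)) + 2)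
    (hU : finrank K (jointRange S T) ≤ 4) :
    finrank K W + finrank K (jointRange S T) ≤ finrank K (jointKer S T) + 6 := by
  rcases eq_or_ne (LinearMap.ker (pencil S T)) ⊥ with h0 | h0
  · rw [h0, finrank_bot] at hN
    omega
  obtain ⟨c, hc, hc0⟩ := (Submodule.ne_bot_iff _).1 h0
  have hdim := finrank_jointKer_add_finrank_jointRange hc0 hc
  rcases lt_or_ge (finrank K (LinearMap.ker (pencil S T))) 2 with h2 | h2
  · omega
  · rw [jointRange_eq_bot_of_two_le_finrank_ker_pencil h2, finrank_bot] at hdim ⊢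
    omega

end Pairs

lemma exists_le_finrank_eq (p : Submodule K V) {k : ℕ} (hk : k ≤ finrank K p) :
    ∃ q ≤ p, finrank K q = k := by
  obtain ⟨s, hcard, hs⟩ := exists_finset_linearIndependent_of_le_finrank hk
  refine ⟨(span K (s : Set p)).map p.subtype, map_subtype_le _ _, ?_⟩
  rw [finrank_map_subtype_eq, finrank_span_finset_eq_card hs, hcard]

lemma exists_isCompl_of_le_finrank [FiniteDimensional K V] (U N : Submodule K V) {k : ℕ}
    (hk : k + finrank K ↥(N ⊓ U) ≤ finrank K N) :
    ∃ V₀ V₂ : Submodule K V, U ≤ V₀ ∧ V₂ ≤ N ∧ IsCompl V₀ V₂ ∧ finrank K V₂ = k := by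
  obtain ⟨C, hC⟩ := Submodule.exists_isCompl (N ⊓ U)
  have hNC : k ≤ finrank K ↥(N ⊓ C) := by
    have := finrank_sup_add_finrank_inf_eq N C
    have := finrank_add_eq_of_isCompl hC
    have := (N ⊔ C).finrank_le
    omega
  obtain ⟨V₂, hV₂, rfl⟩ := exists_le_finrank_eq _ hNC
  have hdisj : Disjoint U V₂ := by
    rw [disjoint_iff_inf_le, ← hC.inf_eq_bot]
    exact le_inf (le_inf (inf_le_right.trans (hV₂.trans inf_le_left)) inf_le_left)
      (inf_le_right.trans (hV₂.trans inf_le_right))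
  obtain ⟨V₀, hUV₀, hcompl⟩ := hdisj.exists_isCompl
  exact ⟨V₀, V₂, hUV₀, hV₂.trans inf_le_left, hcompl, rfl⟩

section Glue

variable {V₀ V₂ : Submodule K V} {W₀ W₂ : Submodule K W}
  (hV : IsCompl V₀ V₂) (hW : IsCompl W₀ W₂) (e₀ : V₀ ≃ₗ[K] W₀) (e₂ : V₂ ≃ₗ[K] W₂)

noncomputable def equivOfIsCompl : V ≃ₗ[K] W :=
  (prodEquivOfIsCompl V₀ V₂ hV).symm ≪≫ₗ e₀.prodCongr e₂ ≪≫ₗ prodEquivOfIsCompl W₀ W₂ hW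

lemma equivOfIsCompl_apply_add (x : V₀) (y : V₂) :
    equivOfIsCompl hV hW e₀ e₂ (x + y) = e₀ x + e₂ y := by
  rw [equivOfIsCompl, ← coe_prodEquivOfIsCompl' V₀ V₂ hV (x, y)]
  simp [coe_prodEquivOfIsCompl']

lemma equivOfIsCompl_apply_of_restrict {F : V →ₗ[K] V} {G : W →ₗ[K] W}
    (hF : ∀ x ∈ V₀, F x ∈ V₀) (hF₂ : V₂ ≤ LinearMap.ker F) (hG₂ : W₂ ≤ LinearMap.ker G)
    (he₀ : ∀ x : V₀, (e₀ (F.restrict hF x) : W) = G (e₀ x)) (v : V) :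
    equivOfIsCompl hV hW e₀ e₂ (F v) = G (equivOfIsCompl hV hW e₀ e₂ v) := by
  obtain ⟨⟨x, y⟩, rfl⟩ := (prodEquivOfIsCompl V₀ V₂ hV).surjective v
  have hFv : F (x + y) = (F.restrict hF x : V) + ((0 : V₂) : V) := by
    simp [LinearMap.mem_ker.1 (hF₂ y.2)]
  rw [coe_prodEquivOfIsCompl', hFv, equivOfIsCompl_apply_add, equivOfIsCompl_apply_add, map_zero,
    he₀, map_add, LinearMap.mem_ker.1 (hG₂ (e₂ y).2)]
  simp

end Glue

lemma weakIso_of_weakIso_restrict {P Q : V →ₗ[K] V} {S T : W →ₗ[K] W}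
    {V₀ V₂ : Submodule K V} {W₀ W₂ : Submodule K W}
    (hPV₀ : ∀ x ∈ V₀, P x ∈ V₀) (hQV₀ : ∀ x ∈ V₀, Q x ∈ V₀)
    (hSW₀ : ∀ x ∈ W₀, S x ∈ W₀) (hTW₀ : ∀ x ∈ W₀, T x ∈ W₀)
    (hV : IsCompl V₀ V₂) (hW : IsCompl W₀ W₂)
    (hV₂ : V₂ ≤ jointKer P Q) (hW₂ : W₂ ≤ jointKer S T) (e₂ : V₂ ≃ₗ[K] W₂)
    (h : WeakIso (P.restrict hPV₀) (Q.restrict hQV₀) (S.restrict hSW₀) (T.restrict hTW₀)) :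
    WeakIso P Q S T := by
  obtain ⟨M, hM, e₀, he₀⟩ := h
  have hker : ∀ a b : K, W₂ ≤ LinearMap.ker (a • S + b • T) := fun a b w hw => by
    obtain ⟨hS, hT⟩ := hW₂ hw
    simp_all
  refine ⟨M, hM, equivOfIsCompl hV hW e₀ e₂, fun v => ⟨?_, ?_⟩⟩
  · refine equivOfIsCompl_apply_of_restrict hV hW e₀ e₂ hPV₀ (hV₂.trans inf_le_left) (hker _ _)
      (fun x => ?_) v
    simpa using congrArg Subtype.val (he₀ x).1
  · refine equivOfIsCompl_apply_of_restrict hV hW e₀ e₂ hQV₀ (hV₂.trans inf_le_right) (hker _ _)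
      (fun x => ?_) v
    simpa using congrArg Subtype.val (he₀ x).2

end

theorem stmt_15_general {K V W : Type*} [Field K]
    [AddCommGroup V] [Module K V] [AddCommGroup W] [Module K W]
    [FiniteDimensional K V] [FiniteDimensional K W]
    (P Q : V →ₗ[K] V) (S T : W →ₗ[K] W)
    (hnw : ¬ WeakIso P Q S T)
    (φ : ((K × K) × V) ≃ₗ[K] ((K × K) × W))
    (hφ : ∀ a b, φ (lieBk P Q a b) = lieBk S T (φ a) (φ b))
    (hPQW : (pqEmb K V).map (φ : ((K × K) × V) →ₗ[K] (K × K) × W) ≤ vEmb K W) :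
    ∃ (V₀ V₂ : Submodule K V) (W₀ W₂ : Submodule K W)
      (hPV₀ : ∀ x ∈ V₀, P x ∈ V₀) (hQV₀ : ∀ x ∈ V₀, Q x ∈ V₀)
      (hSW₀ : ∀ x ∈ W₀, S x ∈ W₀) (hTW₀ : ∀ x ∈ W₀, T x ∈ W₀),
      V₀ ⊓ V₂ = ⊥ ∧ V₀ ⊔ V₂ = ⊤ ∧ W₀ ⊓ W₂ = ⊥ ∧ W₀ ⊔ W₂ = ⊤ ∧
      (∀ v ∈ V₂, P v = 0 ∧ Q v = 0) ∧ (∀ w ∈ W₂, S w = 0 ∧ T w = 0) ∧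
      Nonempty (↥V₂ ≃ₗ[K] ↥W₂) ∧
      Module.finrank K ↥V₀ = Module.finrank K ↥W₀ ∧ Module.finrank K ↥V₀ ≤ 6 ∧
      ¬ WeakIso (P.restrict hPV₀) (Q.restrict hQV₀)
          (S.restrict hSW₀) (T.restrict hTW₀) := by
  have hdim : Module.finrank K W = Module.finrank K V := by
    have := φ.finrank_eq
    simp only [Module.finrank_prod, Module.finrank_self] at this
    omega
  obtain ⟨A, hA⟩ := exists_pencil_eq_comp φ hφ hPQW
  have hNV := finrank_le_finrank_jointKer_add_two hA
  have hUV := finrank_jointRange_le_four hA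
  have hUW := (finrank_jointRange_le φ hφ).trans hUV
  have hZ := finrank_ker_pencil_add_finrank_jointKer_eq φ hφ
  have hV6 := finrank_add_finrank_jointRange_le (S := P) (T := Q) (by omega) hUV
  have hW6 := finrank_add_finrank_jointRange_le (S := S) (T := T) (by omega) hUW
  set uV := Module.finrank K ↥(jointKer P Q ⊓ jointRange P Q)
  set uW := Module.finrank K ↥(jointKer S T ⊓ jointRange S T)
  have huV : uV ≤ _ := Submodule.finrank_mono inf_le_right
  have huW : uW ≤ _ := Submodule.finrank_mono inf_le_right
  have hνV : uV ≤ _ := Submodule.finrank_mono inf_le_left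
  have hνW : uW ≤ _ := Submodule.finrank_mono inf_le_left
  set k := min (Module.finrank K (jointKer P Q) - uV) (Module.finrank K (jointKer S T) - uW)
  obtain ⟨V₀, V₂, hUV₀, hV₂, hV, hV₂k⟩ :=
    exists_isCompl_of_le_finrank (jointRange P Q) (jointKer P Q) (k := k) (by omega)
  obtain ⟨W₀, W₂, hUW₀, hW₂, hW, hW₂k⟩ :=
    exists_isCompl_of_le_finrank (jointRange S T) (jointKer S T) (k := k) (by omega)
  have hV₀ := Submodule.finrank_add_eq_of_isCompl hV
  have hW₀ := Submodule.finrank_add_eq_of_isCompl hW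
  obtain ⟨e₂⟩ := FiniteDimensional.nonempty_linearEquiv_of_finrank_eq (hV₂k.trans hW₂k.symm)
  refine ⟨V₀, V₂, W₀, W₂, fun x _ => hUV₀ (Submodule.mem_sup_left ⟨x, rfl⟩),
    fun x _ => hUV₀ (Submodule.mem_sup_right ⟨x, rfl⟩),
    fun x _ => hUW₀ (Submodule.mem_sup_left ⟨x, rfl⟩),
    fun x _ => hUW₀ (Submodule.mem_sup_right ⟨x, rfl⟩), hV.inf_eq_bot, hV.sup_eq_top,
    hW.inf_eq_bot, hW.sup_eq_top, fun v hv => hV₂ hv, fun w hw => hW₂ hw, ⟨e₂⟩,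
    by omega, by omega, fun h => hnw (weakIso_of_weakIso_restrict _ _ _ _ hV hW hV₂ hW₂ e₂ h)⟩

/-- Lemma 5: if V and W are not weakly isomorphic but there is a Lie
algebra isomorphism φ : L_V → L_W with φ(K⟨P,Q⟩) ⊆ W, then V = V₀ ⊕ V₂ and
W = W₀ ⊕ W₂, with V₂, W₂ isomorphic trivial modules, dim V₀ = dim W₀ ≤ 6, and
V₀, W₀ not weakly isomorphic. -/
theorem stmt_15 {K V W : Type*} [Field K] [IsAlgClosed K] [CharZero K]
    [AddCommGroup V] [Module K V] [AddCommGroup W] [Module K W]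
    [FiniteDimensional K V] [FiniteDimensional K W]
    (P Q : V →ₗ[K] V) (S T : W →ₗ[K] W)
    (hPQ : ∀ v, P (Q v) = Q (P v)) (hST : ∀ w, S (T w) = T (S w))
    (hnw : ¬ WeakIso P Q S T)
    (φ : ((K × K) × V) ≃ₗ[K] ((K × K) × W))
    (hφ : ∀ a b, φ (lieBk P Q a b) = lieBk S T (φ a) (φ b))
    (hPQW : (pqEmb K V).map (φ : ((K × K) × V) →ₗ[K] (K × K) × W) ≤ vEmb K W) :
    ∃ (V₀ V₂ : Submodule K V) (W₀ W₂ : Submodule K W)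
      (hPV₀ : ∀ x ∈ V₀, P x ∈ V₀) (hQV₀ : ∀ x ∈ V₀, Q x ∈ V₀)
      (hSW₀ : ∀ x ∈ W₀, S x ∈ W₀) (hTW₀ : ∀ x ∈ W₀, T x ∈ W₀),
      V₀ ⊓ V₂ = ⊥ ∧ V₀ ⊔ V₂ = ⊤ ∧ W₀ ⊓ W₂ = ⊥ ∧ W₀ ⊔ W₂ = ⊤ ∧
      (∀ v ∈ V₂, P v = 0 ∧ Q v = 0) ∧ (∀ w ∈ W₂, S w = 0 ∧ T w = 0) ∧
      Nonempty (↥V₂ ≃ₗ[K] ↥W₂) ∧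
      Module.finrank K ↥V₀ = Module.finrank K ↥W₀ ∧ Module.finrank K ↥V₀ ≤ 6 ∧
      ¬ WeakIso (P.restrict hPV₀) (Q.restrict hQV₀)
          (S.restrict hSW₀) (T.restrict hTW₀) :=
  stmt_15_general P Q S T hnw φ hφ hPQW
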